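/- Let G be a topological group and K ⊆ G a compact open subgroup. Then for every x ∈ G the double coset KxK is a union of finitely many right cosets of K, i.e. the image of KxK in G/K is finite. In particular (G, K) is a good pair: for any two double cosets X, Y of K, the multiplication map m_{X,Y} has finite fibers and its image is a finite union of double cosets. -/

import Mathlib

/-!
Since `K` is open, `G ⧸ K` is discrete; since `K` is compact, so is `KxK`, hence its image in
`G ⧸ K` is finite. A point `(p, q)` of the fiber of `m_{X,Y}` over `z` is determined by `p`
(as `q = p⁻¹ z`), and replacing `p` by `p g⁻¹` with `g ∈ K` sweeps out the coset `pK`, so the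
fiber injects into the image of `X` in `G ⧸ K`. Finally `KxK · KyK` is compact and is covered
by the double cosets of its points, which are open; finitely many of them suffice.
-/

open scoped Pointwise

/-- The double coset `K x K` of `x` with respect to the subgroup `K`. -/
def doubleCoset {G : Type*} [Group G] (K : Subgroup G) (x : G) : Set G :=
  {g | ∃ a ∈ K, ∃ b ∈ K, g = a * x * b}

/-- The orbit relation on the fiber of the multiplication map `m_{X,Y}` over `z`:
`(p, q)` is identified with `(p * g⁻¹, g * q)` for `g ∈ K`. -/
def fiberRel {G : Type*} [Group G] (K : Subgroup G) (X Y : Set G) (z : G) :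
    {pq : G × G // pq.1 ∈ X ∧ pq.2 ∈ Y ∧ pq.1 * pq.2 = z} →
    {pq : G × G // pq.1 ∈ X ∧ pq.2 ∈ Y ∧ pq.1 * pq.2 = z} → Prop :=
  fun p q => ∃ g ∈ K, q.1.1 = p.1.1 * g⁻¹ ∧ q.1.2 = g * p.1.2

section doubleCoset

variable {G : Type*} [Group G] (K : Subgroup G)

lemma doubleCoset_eq_mul (x : G) : doubleCoset K x = (K : Set G) * {x} * (K : Set G) := by
  ext g
  simp only [doubleCoset, Set.mem_ofPred_eq, Set.mem_mul, Set.mem_singleton_iff]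
  constructor
  · rintro ⟨a, ha, b, hb, rfl⟩
    exact ⟨a * x, ⟨a, ha, x, rfl, rfl⟩, b, hb, rfl⟩
  · rintro ⟨_, ⟨a, ha, _, rfl, rfl⟩, b, hb, rfl⟩
    exact ⟨a, ha, b, hb, rfl⟩

lemma mem_doubleCoset_self (x : G) : x ∈ doubleCoset K x :=
  ⟨1, K.one_mem, 1, K.one_mem, by group⟩

lemma doubleCoset_subset_mul {x y z : G} (hz : z ∈ doubleCoset K x * doubleCoset K y) :
    doubleCoset K z ⊆ doubleCoset K x * doubleCoset K y := by
  obtain ⟨p, ⟨c, hc, d, hd, rfl⟩, q, ⟨e, he, f, hf, rfl⟩, rfl⟩ := hz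
  rintro _ ⟨a, ha, b, hb, rfl⟩
  exact ⟨a * c * x * d, ⟨a * c, K.mul_mem ha hc, d, hd, by group⟩,
    e * y * f * b, ⟨e, he, f * b, K.mul_mem hf hb, by group⟩, by group⟩

def fiberRel.cosetOfFst (X Y : Set G) (z : G) :
    Quot (fiberRel K X Y z) → ↥((QuotientGroup.mk (s := K)) '' X) :=
  Quot.lift (fun p => ⟨QuotientGroup.mk p.1.1, p.1.1, p.2.1, rfl⟩) <| by
    rintro p q ⟨g, hg, hq, -⟩
    refine Subtype.ext (QuotientGroup.eq.mpr ?_)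
    simpa [hq] using K.inv_mem hg

lemma fiberRel.cosetOfFst_injective (X Y : Set G) (z : G) :
    Function.Injective (fiberRel.cosetOfFst K X Y z) := by
  rintro ⟨p⟩ ⟨q⟩ hpq
  have hK : p.1.1⁻¹ * q.1.1 ∈ K := QuotientGroup.eq.mp (congrArg Subtype.val hpq)
  refine Quot.sound ⟨q.1.1⁻¹ * p.1.1, by simpa using K.inv_mem hK, by group, ?_⟩
  calc q.1.2 = q.1.1⁻¹ * (q.1.1 * q.1.2) := by group
    _ = q.1.1⁻¹ * (p.1.1 * p.1.2) := by rw [p.2.2.2, q.2.2.2]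
    _ = q.1.1⁻¹ * p.1.1 * p.1.2 := by group

lemma finite_quot_fiberRel {X : Set G} (hX : ((QuotientGroup.mk (s := K)) '' X).Finite)
    (Y : Set G) (z : G) : Finite (Quot (fiberRel K X Y z)) :=
  have := hX.to_subtype
  Finite.of_injective _ (fiberRel.cosetOfFst_injective K X Y z)

variable [TopologicalSpace G] [IsTopologicalGroup G] {K}

lemma isOpen_doubleCoset (hK : IsOpen (K : Set G)) (x : G) : IsOpen (doubleCoset K x) := by
  rw [doubleCoset_eq_mul]
  exact hK.mul_left

lemma isCompact_doubleCoset (hK : IsCompact (K : Set G)) (x : G) :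
    IsCompact (doubleCoset K x) := by
  rw [doubleCoset_eq_mul]
  exact (hK.mul isCompact_singleton).mul hK

lemma IsCompact.finite_image_quotientMk (hK : IsOpen (K : Set G)) {s : Set G}
    (hs : IsCompact s) : ((QuotientGroup.mk (s := K)) '' s).Finite :=
  have := QuotientGroup.discreteTopology hK
  (hs.image QuotientGroup.continuous_mk).finite_of_discrete

lemma IsCompact.exists_finset_eq_biUnion_doubleCoset (hK : IsOpen (K : Set G)) {s : Set G}
    (hs : IsCompact s) (hsK : ∀ z ∈ s, doubleCoset K z ⊆ s) :
    ∃ F : Finset G, s = ⋃ f ∈ F, doubleCoset K f := by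
  obtain ⟨t, hts, ht, hcover⟩ := hs.elim_finite_subcover_image (b := s)
    (fun z _ => isOpen_doubleCoset hK z)
    (fun z hz => Set.mem_biUnion hz (mem_doubleCoset_self K z))
  refine ⟨ht.toFinset, ?_⟩
  simp only [Set.Finite.mem_toFinset]
  exact hcover.antisymm (Set.iUnion₂_subset fun z hz => hsK z (hts hz))

end doubleCoset

/-- If `G` is a topological group and `K` a compact open subgroup, then every double coset
`KxK` is a finite union of right cosets of `K` (its image in `G ⧸ K` is finite); in particular
`(G, K)` is a good pair: all fibers of the multiplication maps `m_{X,Y}` between double cosets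
are finite, and the image of each `m_{X,Y}` is a finite union of double cosets. -/
theorem stmt3 {G : Type*} [Group G] [TopologicalSpace G] [IsTopologicalGroup G]
    (K : Subgroup G) (hKcompact : IsCompact (K : Set G)) (hKopen : IsOpen (K : Set G)) :
    (∀ x : G, ((QuotientGroup.mk (s := K)) '' doubleCoset K x).Finite) ∧
    ∀ x y : G,
      (∀ z : G, Finite (Quot (fiberRel K (doubleCoset K x) (doubleCoset K y) z))) ∧
      ∃ F : Finset G, doubleCoset K x * doubleCoset K y = ⋃ f ∈ F, doubleCoset K f := by
  have hfin (x : G) : ((QuotientGroup.mk (s := K)) '' doubleCoset K x).Finite :=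
    (isCompact_doubleCoset hKcompact x).finite_image_quotientMk hKopen
  refine ⟨hfin, fun x y => ⟨finite_quot_fiberRel K (hfin x) _, ?_⟩⟩
  exact ((isCompact_doubleCoset hKcompact x).mul (isCompact_doubleCoset hKcompact y))
    |>.exists_finset_eq_biUnion_doubleCoset hKopen fun z hz => doubleCoset_subset_mul K hz
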